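/- For every s ≥ 1, the hat guessing game on the path P_n with all vertices having hatness 4s−1, guessing number s, except that one endpoint has hatness 2s, is losing for all n. Consequently, the game ⟨P_n, constant hatness 4s−1, constant guessing s⟩ is losing for all n, so HG_s(P_n) ≤ 4s−2. -/
import Mathlib


/-- A winning strategy in the hat guessing game `⟨G, h, g⟩`: each sage `v` deterministically
outputs at most `g v` guesses depending only on the hat colors of its neighbors, and for
every hat assignment (with `c v < h v`) some sage's guess set contains its own color. -/
def HatWinning {V : Type*} (G : SimpleGraph V) (h g : V → ℕ) : Prop :=
  ∃ σ : V → (V → ℕ) → Finset ℕ,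
    (∀ v c c', (∀ u, G.Adj v u → c u = c' u) → σ v c = σ v c') ∧
    (∀ v c, (σ v c).card ≤ g v) ∧
    ∀ c : V → ℕ, (∀ v, c v < h v) → ∃ v, c v ∈ σ v c

/-- The hat guessing game played by the sages occupying the vertices of `S` only
(the game on the induced subgraph `G[S]`). -/
def HatWinningOn {V : Type*} (G : SimpleGraph V) (S : Set V) (h g : V → ℕ) : Prop :=
  ∃ σ : V → (V → ℕ) → Finset ℕ,
    (∀ v ∈ S, ∀ c c', (∀ u ∈ S, G.Adj v u → c u = c' u) → σ v c = σ v c') ∧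
    (∀ v ∈ S, ∀ c, (σ v c).card ≤ g v) ∧
    ∀ c : V → ℕ, (∀ v ∈ S, c v < h v) → ∃ v ∈ S, c v ∈ σ v c

/-- Shrinking the hatness functions preserves winning. -/
lemma hatWinning_mono {V : Type*} (G : SimpleGraph V) {h h' g : V → ℕ}
    (hh : ∀ v, h' v ≤ h v) (hw : HatWinning G h g) : HatWinning G h' g := by
  obtain ⟨σ, h1, h2, h3⟩ := hw
  exact ⟨σ, h1, h2, fun c hc => h3 c (fun v => lt_of_lt_of_le (hc v) (hh v))⟩

/-- Counting: there is a color `a ∈ B` that is guessed by the first sage for fewer than `2s`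
colors of its neighbor. -/
lemma exists_good_color (s : ℕ) (hs : 1 ≤ s) (B : Finset ℕ) (hB : 2 * s ≤ B.card)
    (F : ℕ → Finset ℕ) (hF : ∀ x, (F x).card ≤ s) :
    ∃ a ∈ B, ((Finset.range (4 * s - 1)).filter (fun x => a ∈ F x)).card < 2 * s := by
  by_contra hcon
  push_neg at hcon
  have key : ∀ a ∈ B, 2 * s ≤ ∑ x ∈ Finset.range (4 * s - 1), (if a ∈ F x then 1 else 0) := by
    intro a ha
    rw [← Finset.card_filter]; exact hcon a ha
  have h1 : 2 * s * B.card ≤ ∑ a ∈ B, ∑ x ∈ Finset.range (4 * s - 1),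
      (if a ∈ F x then 1 else 0) := by
    calc 2 * s * B.card = ∑ _a ∈ B, 2 * s := by rw [Finset.sum_const, smul_eq_mul, mul_comm]
    _ ≤ _ := Finset.sum_le_sum key
  rw [Finset.sum_comm] at h1
  have h2 : ∀ x ∈ Finset.range (4 * s - 1),
      (∑ a ∈ B, (if a ∈ F x then 1 else 0)) ≤ s := by
    intro x _
    calc (∑ a ∈ B, if a ∈ F x then 1 else 0) = (B.filter (fun a => a ∈ F x)).card := by
          rw [Finset.card_filter]
    _ ≤ (F x).card := Finset.card_le_card (by intro a ha; exact (Finset.mem_filter.mp ha).2)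
    _ ≤ s := hF x
  have h3 : (∑ x ∈ Finset.range (4 * s - 1), ∑ a ∈ B, (if a ∈ F x then 1 else 0))
      ≤ (4 * s - 1) * s := by
    calc _ ≤ ∑ _x ∈ Finset.range (4 * s - 1), s := Finset.sum_le_sum h2
    _ = (4 * s - 1) * s := by rw [Finset.sum_const, smul_eq_mul, Finset.card_range]
  have h6 := le_trans h1 h3
  have h4 : 2 * s * (2 * s) ≤ 2 * s * B.card := Nat.mul_le_mul_left _ hB
  have h5 : 2 * s * (2 * s) ≤ (4 * s - 1) * s := le_trans h4 h6
  nlinarith [Nat.sub_add_cancel (show 1 ≤ 4 * s by omega)]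

/-- Key induction: on the suffix `[m, n)` of the path, if the first sage of the suffix has
color set `B` of size `≥ 2s` and the others have `4s - 1` colors, the adversary wins. -/
lemma path_key (s : ℕ) (hs : 1 ≤ s) (n : ℕ) :
    ∀ d m, n ≤ m + d → ∀ B : Finset ℕ, 2 * s ≤ B.card →
    ∀ σ : Fin n → (Fin n → ℕ) → Finset ℕ,
    (∀ i : Fin n, m ≤ i.val → ∀ c c',
      (∀ u, m ≤ u.val → (SimpleGraph.pathGraph n).Adj i u → c u = c' u) → σ i c = σ i c') →
    (∀ (i : Fin n) c, (σ i c).card ≤ s) →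
    ∃ c : Fin n → ℕ,
      (∀ i : Fin n, m ≤ i.val → (i.val = m → c i ∈ B) ∧ (m < i.val → c i < 4 * s - 1)) ∧
      ∀ i : Fin n, m ≤ i.val → c i ∉ σ i c := by
  intro d
  induction d with
  | zero =>
    intro m hm B hB σ hdep hcard
    refine ⟨fun _ => 0, ?_, ?_⟩ <;>
    · intro i hi
      exact absurd hi (by have := i.isLt; omega)
  | succ d ih =>
    intro m hm B hB σ hdep hcard
    by_cases hmn : n ≤ m
    · exact ih m (by omega) B hB σ hdep hcard
    push_neg at hmn
    set vm : Fin n := ⟨m, hmn⟩ with hvm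
    have hvmv : (vm : ℕ) = m := rfl
    by_cases hm1 : m + 1 < n
    · -- vm has a successor vm1
      set vm1 : Fin n := ⟨m + 1, hm1⟩ with hvm1
      have hvm1v : (vm1 : ℕ) = m + 1 := rfl
      have hne01 : vm1 ≠ vm := by
        intro h
        have : (vm1 : ℕ) = (vm : ℕ) := by rw [h]
        omega
      -- σ vm only depends on the color of vm1
      set F : ℕ → Finset ℕ := fun x => σ vm (fun u => if u = vm1 then x else 0) with hF
      have hdepF : ∀ c : Fin n → ℕ, σ vm c = F (c vm1) := by
        intro c
        apply hdep vm (le_of_eq hvmv.symm)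
        intro u hu hadj
        rw [SimpleGraph.pathGraph_adj] at hadj
        have hu1 : u = vm1 := Fin.ext (by omega)
        subst hu1
        simp
      obtain ⟨a, haB, hagood⟩ := exists_good_color s hs B hB F (fun x => hcard vm _)
      set Good : Finset ℕ := (Finset.range (4 * s - 1)).filter (fun x => a ∉ F x) with hGood
      have hGoodcard : 2 * s ≤ Good.card := by
        have hsplit := Finset.card_filter_add_card_filter_not
          (s := Finset.range (4 * s - 1)) (p := fun x => a ∈ F x)
        rw [Finset.card_range] at hsplit
        have hGc : Good.card = ((Finset.range (4 * s - 1)).filter (fun x => ¬ a ∈ F x)).card :=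
          rfl
        omega
      set σ' : Fin n → (Fin n → ℕ) → Finset ℕ :=
        fun i c => σ i (Function.update c vm a) with hσ'
      have hdep' : ∀ i : Fin n, m + 1 ≤ i.val → ∀ c c',
          (∀ u, m + 1 ≤ u.val → (SimpleGraph.pathGraph n).Adj i u → c u = c' u) →
          σ' i c = σ' i c' := by
        intro i hi c c' hcc
        apply hdep i (by omega)
        intro u hu hadj
        rcases eq_or_ne u vm with rfl | hne
        · simp
        · have huv : m + 1 ≤ u.val := by
            rcases Nat.lt_or_ge u.val (m + 1) with h | h
            · exact absurd (Fin.ext (by omega : u.val = (vm : ℕ))) hne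
            · exact h
          rw [Function.update_of_ne hne, Function.update_of_ne hne]
          exact hcc u huv hadj
      obtain ⟨c', hc'range, hc'guess⟩ := ih (m + 1) (by omega) Good hGoodcard σ' hdep'
        (fun i c => hcard i _)
      refine ⟨Function.update c' vm a, ?_, ?_⟩
      · intro i hi
        rcases eq_or_ne i vm with rfl | hne
        · constructor
          · intro _; simpa using haB
          · intro h; omega
        · have hi1 : m + 1 ≤ i.val := by
            rcases Nat.lt_or_ge i.val (m + 1) with h | h
            · exact absurd (Fin.ext (by omega : i.val = (vm : ℕ))) hne
            · exact h
          rw [Function.update_of_ne hne]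
          constructor
          · intro h; omega
          · intro _
            rcases Nat.lt_or_ge (m + 1) i.val with h | h
            · exact (hc'range i hi1).2 h
            · have hieq : i.val = m + 1 := by omega
              have hmem := (hc'range i hi1).1 hieq
              rw [hGood, Finset.mem_filter, Finset.mem_range] at hmem
              exact hmem.1
      · intro i hi
        rcases eq_or_ne i vm with rfl | hne
        · rw [hdepF]
          rw [Function.update_self, Function.update_of_ne hne01]
          have hmem : c' vm1 ∈ Good :=
            (hc'range vm1 (le_of_eq hvm1v.symm)).1 hvm1v
          rw [hGood, Finset.mem_filter] at hmem
          exact hmem.2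
        · have hi1 : m + 1 ≤ i.val := by
            rcases Nat.lt_or_ge i.val (m + 1) with h | h
            · exact absurd (Fin.ext (by omega : i.val = (vm : ℕ))) hne
            · exact h
          rw [Function.update_of_ne hne]
          exact hc'guess i hi1
    · -- vm is the last vertex of the path: σ vm is constant
      have hn : n = m + 1 := by omega
      have hconst : ∀ c : Fin n → ℕ, σ vm c = σ vm (fun _ => 0) := by
        intro c
        apply hdep vm (le_of_eq hvmv.symm)
        intro u hu hadj
        rw [SimpleGraph.pathGraph_adj] at hadj
        have := u.isLt
        omega
      have hex : ∃ b ∈ B, b ∉ σ vm (fun _ => 0) := by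
        by_contra hcon
        push_neg at hcon
        have h1 := Finset.card_le_card (fun b hb => hcon b hb)
        have h2 := hcard vm (fun _ => 0)
        omega
      obtain ⟨b, hbB, hbg⟩ := hex
      refine ⟨fun _ => b, ?_, ?_⟩
      · intro i hi
        exact ⟨fun _ => hbB, fun h => by have := i.isLt; omega⟩
      · intro i hi
        have hiv : i = vm := Fin.ext (by have := i.isLt; omega)
        subst hiv
        rw [hconst]
        exact hbg

/-- The game on the path `P_n` with `s` guesses per vertex, hatness `4s-1`
everywhere except hatness `2s` at the endpoint `v₁`, is losing for all `n`. Consequently the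
game `⟨P_n, 4s-1, s⟩` is losing for all `n`, so `HG_s(P_n) ≤ 4s-2`. -/
theorem path_losing (s : ℕ) (hs : 1 ≤ s) (n : ℕ) :
    (¬ HatWinning (SimpleGraph.pathGraph n)
        (fun i => if (i : ℕ) = 0 then 2 * s else 4 * s - 1) (fun _ => s)) ∧
    (¬ HatWinning (SimpleGraph.pathGraph n) (fun _ => 4 * s - 1) (fun _ => s)) ∧
    (∀ k, HatWinning (SimpleGraph.pathGraph n) (fun _ => k) (fun _ => s) → k ≤ 4 * s - 2) := by
  have main : ¬ HatWinning (SimpleGraph.pathGraph n)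
      (fun i => if (i : ℕ) = 0 then 2 * s else 4 * s - 1) (fun _ => s) := by
    rintro ⟨σ, hdep, hcard, hwin⟩
    obtain ⟨c, hrange, hguess⟩ := path_key s hs n n 0 (by omega)
      (Finset.range (2 * s)) (by rw [Finset.card_range]) σ
      (fun i _ c c' h => hdep i c c' (fun u hadj => h u (Nat.zero_le _) hadj))
      hcard
    obtain ⟨v, hv⟩ := hwin c (by
      intro v
      obtain ⟨h0, hpos⟩ := hrange v (Nat.zero_le _)
      by_cases hv0 : (v : ℕ) = 0
      · simp only [hv0, if_pos]
        have := h0 hv0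
        rwa [Finset.mem_range] at this
      · simp only [hv0, if_neg, if_false]
        exact hpos (Nat.pos_of_ne_zero hv0))
    exact hguess v (Nat.zero_le _) hv
  refine ⟨main, ?_, ?_⟩
  · intro hw
    exact main (hatWinning_mono _ (fun v => by split <;> omega) hw)
  · intro k hw
    by_contra hk
    push_neg at hk
    have h1 : 4 * s - 1 ≤ k := by omega
    have hw' : HatWinning (SimpleGraph.pathGraph n) (fun _ => 4 * s - 1) (fun _ => s) :=
      hatWinning_mono _ (fun _ => h1) hw
    exact main (hatWinning_mono _ (fun v => by split <;> omega) hw')
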